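/- arXiv:0812.4667 — 4 statements merged into one kernel-verified Lean document; each statement's English description precedes it below -/
import Mathlib

section
/- Let f : Fin n → ℝ → ℝ be such that each f i is continuous on (0,1] and f i ε ≠ 0 for every ε ∈ (0,1]. Let E be a finite set of triples (i,j,k) of elements of Fin n and let F : Fin n → Fin n → Fin n → ℝ be such that for every (i,j,k) ∈ E the function ε ↦ (f i ε) * (f j ε) / (f k ε) tends to F i j k as ε → 0⁺, with F i j k ≠ 0. Then there exists y : Fin n → ℝ with y i ≠ 0 for all i such that y i * y j / y k = F i j k for every (i,j,k) ∈ E. -/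
/-!
Each `f i` has constant sign on the connected set `(0,1]`, so after dividing by `f i 1` all
functions are positive, and a solution for the normalized limits rescales to one for `F`.
For positive functions, logarithms turn the system into the linear one
`x i + x j - x k = log F i j k`, whose right-hand side is a limit of values of this linear map.
A linear map into a finite-dimensional space has closed range, so the limit is attained.
-/

open Filter Topology Real

theorem IsPreconnected.div_pos_of_continuousOn {X : Type*} [TopologicalSpace X] {S : Set X}
    {f : X → ℝ} (hS : IsPreconnected S) (hf : ContinuousOn f S) (hne : ∀ x ∈ S, f x ≠ 0)
    {x a : X} (hx : x ∈ S) (ha : a ∈ S) : 0 < f x / f a := by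
  by_contra! hxa
  have hcont : ContinuousOn (fun y => f y / f a) S := hf.div_const _
  have hzero : (0 : ℝ) ∈ Set.Icc (f x / f a) (f a / f a) :=
    ⟨hxa, by rw [div_self (hne a ha)]; exact zero_le_one⟩
  obtain ⟨z, hz, hfz⟩ := hS.intermediate_value hx ha hcont hzero
  exact div_ne_zero (hne z hz) (hne a ha) hfz

theorem LinearMap.mem_range_of_tendsto {𝕜 V W α : Type*} [NontriviallyNormedField 𝕜]
    [CompleteSpace 𝕜] [AddCommGroup V] [Module 𝕜 V] [AddCommGroup W] [Module 𝕜 W]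
    [TopologicalSpace W] [IsTopologicalAddGroup W] [ContinuousSMul 𝕜 W] [T2Space W]
    [FiniteDimensional 𝕜 W] (A : V →ₗ[𝕜] W) {l : Filter α} [l.NeBot] {v : α → V} {w : W}
    (h : Tendsto (fun a => A (v a)) l (𝓝 w)) : w ∈ LinearMap.range A :=
  (LinearMap.range A).closed_of_finiteDimensional.mem_of_tendsto h
    (Eventually.of_forall fun a => ⟨v a, rfl⟩)

section MultiplicativeSystem

variable {ι : Type*} (E : Finset (ι × ι × ι))

/-- The logarithm of the monomial map `y ↦ (y i * y j / y k)_{(i, j, k) ∈ E}`. -/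
def tripleSumSub : (ι → ℝ) →ₗ[ℝ] (E → ℝ) :=
  let p (i : ι) : (ι → ℝ) →ₗ[ℝ] ℝ := LinearMap.proj i
  LinearMap.pi fun t => p t.1.1 + p t.1.2.1 - p t.1.2.2

theorem tripleSumSub_apply (x : ι → ℝ) (t : E) :
    tripleSumSub E x t = x t.1.1 + x t.1.2.1 - x t.1.2.2 := by
  simp [tripleSumSub]

theorem exists_pos_mul_div_eq_of_tendsto {α : Type*} {l : Filter α} [l.NeBot]
    {g : α → ι → ℝ} {G : ι × ι × ι → ℝ} (hg : ∀ᶠ a in l, ∀ i, 0 < g a i)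
    (hG : ∀ t ∈ E, Tendsto (fun a => g a t.1 * g a t.2.1 / g a t.2.2) l (𝓝 (G t)))
    (hGne : ∀ t ∈ E, G t ≠ 0) :
    ∃ z : ι → ℝ, (∀ i, 0 < z i) ∧ ∀ t ∈ E, z t.1 * z t.2.1 / z t.2.2 = G t := by
  have hGpos : ∀ t ∈ E, 0 < G t := fun t ht =>
    have hnonneg : ∀ᶠ a in l, 0 ≤ g a t.1 * g a t.2.1 / g a t.2.2 :=
      hg.mono fun a ha => (div_pos (mul_pos (ha _) (ha _)) (ha _)).le
    (ge_of_tendsto (hG t ht) hnonneg).lt_of_ne' (hGne t ht)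
  have hlog : Tendsto (fun a => tripleSumSub E fun i => log (g a i)) l
      (𝓝 fun t => log (G t)) := by
    refine tendsto_pi_nhds.2 fun t => ?_
    refine ((continuousAt_log (hGne t t.2)).tendsto.comp (hG t t.2)).congr' ?_
    filter_upwards [hg] with a ha
    simp only [Function.comp_apply, tripleSumSub_apply]
    rw [log_div (mul_pos (ha _) (ha _)).ne' (ha _).ne', log_mul (ha _).ne' (ha _).ne']
  obtain ⟨x, hx⟩ := (tripleSumSub E).mem_range_of_tendsto hlog
  refine ⟨fun i => exp (x i), fun i => exp_pos _, fun t ht => ?_⟩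
  have hxt : x t.1 + x t.2.1 - x t.2.2 = log (G t) :=
    (tripleSumSub_apply E x ⟨t, ht⟩).symm.trans (congrFun hx _)
  rw [← exp_add, ← exp_sub, hxt, exp_log (hGpos t ht)]

end MultiplicativeSystem

/-- Compatibility of the multiplicative system `Σ`: nonzero limits `F i j k` of the
quotients `f_i f_j / f_k` of continuous nonvanishing functions on `(0,1]` are always
realized by a constant nonzero tuple `y` with `y_i y_j / y_k = F i j k`. -/
theorem multiplicative_system_compatible
    (n : ℕ) (f : Fin n → ℝ → ℝ)
    (hfcont : ∀ i, ContinuousOn (f i) (Set.Ioc 0 1))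
    (hfne : ∀ i, ∀ ε ∈ Set.Ioc (0 : ℝ) 1, f i ε ≠ 0)
    (E : Finset (Fin n × Fin n × Fin n))
    (F : Fin n → Fin n → Fin n → ℝ)
    (hF : ∀ t ∈ E, Tendsto (fun ε : ℝ => f t.1 ε * f t.2.1 ε / f t.2.2 ε)
      (𝓝[>] (0 : ℝ)) (𝓝 (F t.1 t.2.1 t.2.2)))
    (hFne : ∀ t ∈ E, F t.1 t.2.1 t.2.2 ≠ 0) :
    ∃ y : Fin n → ℝ, (∀ i, y i ≠ 0) ∧
      ∀ t ∈ E, y t.1 * y t.2.1 / y t.2.2 = F t.1 t.2.1 t.2.2 := by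
  have h1 : (1 : ℝ) ∈ Set.Ioc 0 1 := Set.right_mem_Ioc.2 zero_lt_one
  have hf1 : ∀ i, f i 1 ≠ 0 := fun i => hfne i 1 h1
  have hpos : ∀ᶠ ε in 𝓝[>] (0 : ℝ), ∀ i, 0 < f i ε / f i 1 := by
    filter_upwards [Ioc_mem_nhdsGT zero_lt_one] with ε hε i
    exact isPreconnected_Ioc.div_pos_of_continuousOn (hfcont i) (hfne i) hε h1
  obtain ⟨z, hz, hzE⟩ := exists_pos_mul_div_eq_of_tendsto E
    (G := fun t => F t.1 t.2.1 t.2.2 * (f t.2.2 1 / (f t.1 1 * f t.2.1 1))) hpos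
    (fun t ht => (hF t ht).mul_const _ |>.congr fun ε => by
      simp only [div_eq_mul_inv, mul_inv, inv_inv]; ring)
    (fun t ht => by simp [hFne t ht, hf1])
  refine ⟨fun i => f i 1 * z i, fun i => mul_ne_zero (hf1 i) (hz i).ne', fun t ht => ?_⟩
  calc f t.1 1 * z t.1 * (f t.2.1 1 * z t.2.1) / (f t.2.2 1 * z t.2.2)
      = f t.1 1 * f t.2.1 1 / f t.2.2 1 * (z t.1 * z t.2.1 / z t.2.2) := by ring
    _ = F t.1 t.2.1 t.2.2 := by
      rw [hzE t ht]
      field_simp [hf1]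
end

section
/- Let f : Fin n → ℝ → ℝ be such that each f i is continuous on (0,1] and f i ε ≠ 0 for every ε ∈ (0,1]. Let E and N be finite sets of triples (i,j,k) of elements of Fin n such that for every (i,j,k) ∈ E the function ε ↦ (f i ε) * (f j ε) / (f k ε) tends as ε → 0⁺ to a nonzero real limit, and for every (i,j,k) ∈ N it tends to 0. Then there exists x : Fin n → ℝ such that x i + x j = x k for every (i,j,k) ∈ E and x i + x j > x k for every (i,j,k) ∈ N. -/
open Filter Topology

/-!
Put `v ε = -log |f ε|` coordinatewise (`Real.log` is `log |·|`). For a triple `(i, j, k)` the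
defect `v_i + v_j - v_k` equals `-log |f_i f_j / f_k|`, so it converges for triples in `E` and
tends to `+∞` for triples in `N`. If `g` is a generalized inverse of the linear map `A` collecting
the defects over `E`, then `v ε - g (A (v ε))` solves the equations; as `A (v ε)` converges, the
correction is bounded, so the defects over `N` still tend to `+∞` and are positive for small `ε`.
-/

theorem LinearMap.exists_comp_comp_eq_self {K V W : Type*} [DivisionRing K] [AddCommGroup V]
    [Module K V] [AddCommGroup W] [Module K W] (A : V →ₗ[K] W) :
    ∃ g : W →ₗ[K] V, A ∘ₗ g ∘ₗ A = A := by
  obtain ⟨R, hR⟩ := A.rangeRestrict.exists_rightInverse_of_surjective A.range_rangeRestrict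
  obtain ⟨g, hg⟩ := LinearMap.exists_extend R
  refine ⟨g, LinearMap.ext fun v => ?_⟩
  have hgA : g (A v) = R (A.rangeRestrict v) := congr($hg (A.rangeRestrict v))
  have hR' : A (R (A.rangeRestrict v)) = A v := congr(Subtype.val ($hR (A.rangeRestrict v)))
  simp only [LinearMap.comp_apply, hgA, hR']

theorem LinearMap.exists_mem_ker_forall_pos_of_tendsto {α ι V W : Type*} [AddCommGroup V]
    [Module ℝ V] [AddCommGroup W] [Module ℝ W] [TopologicalSpace W] [IsTopologicalAddGroup W]
    [ContinuousSMul ℝ W] [T2Space W] [FiniteDimensional ℝ W]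
    (A : V →ₗ[ℝ] W) (B : ι → V →ₗ[ℝ] ℝ) (s : Finset ι) {l : Filter α} [l.NeBot]
    {v : α → V} {c : W} (hA : Tendsto (fun a => A (v a)) l (𝓝 c))
    (hB : ∀ i ∈ s, Tendsto (fun a => B i (v a)) l atTop) :
    ∃ x ∈ LinearMap.ker A, ∀ i ∈ s, 0 < B i x := by
  obtain ⟨g, hg⟩ := A.exists_comp_comp_eq_self
  have hker : ∀ a, v a - g (A (v a)) ∈ LinearMap.ker A := fun a => by
    rw [LinearMap.mem_ker, map_sub, sub_eq_zero]
    exact congr($hg (v a)).symm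
  have hpos : ∀ i ∈ s, Tendsto (fun a => B i (v a - g (A (v a)))) l atTop := fun i hi => by
    have hbdd : Tendsto (fun a => -(B i ∘ₗ g) (A (v a))) l (𝓝 (-(B i ∘ₗ g) c)) :=
      (((B i ∘ₗ g).continuous_of_finiteDimensional.tendsto c).comp hA).neg
    simpa [sub_eq_add_neg] using (hB i hi).atTop_add hbdd
  obtain ⟨a, ha⟩ := (s.eventually_all.2 fun i hi => (hpos i hi).eventually_gt_atTop 0).exists
  exact ⟨_, hker a, ha⟩

def tripleDefect {R ι : Type*} [CommRing R] (t : ι × ι × ι) : (ι → R) →ₗ[R] R :=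
  LinearMap.proj (R := R) (φ := fun _ : ι => R) t.1 + LinearMap.proj t.2.1 - LinearMap.proj t.2.2

@[simp]
theorem tripleDefect_apply {R ι : Type*} [CommRing R] (t : ι × ι × ι) (x : ι → R) :
    tripleDefect t x = x t.1 + x t.2.1 - x t.2.2 :=
  rfl

theorem tripleDefect_neg_log {ι : Type*} (t : ι × ι × ι) {y : ι → ℝ} (h₁ : y t.1 ≠ 0)
    (h₂ : y t.2.1 ≠ 0) (h₃ : y t.2.2 ≠ 0) :
    tripleDefect t (fun i => -Real.log (y i)) = -Real.log (y t.1 * y t.2.1 / y t.2.2) := by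
  rw [tripleDefect_apply, Real.log_div (mul_ne_zero h₁ h₂) h₃, Real.log_mul h₁ h₂]
  ring

theorem mixed_linear_system_compatible_general
    (n : ℕ) (f : Fin n → ℝ → ℝ)
    (hfne : ∀ i, ∀ ε ∈ Set.Ioc (0 : ℝ) 1, f i ε ≠ 0)
    (E N : Finset (Fin n × Fin n × Fin n))
    (hE : ∀ t ∈ E, ∃ L : ℝ, L ≠ 0 ∧
      Tendsto (fun ε : ℝ => f t.1 ε * f t.2.1 ε / f t.2.2 ε) (𝓝[>] (0 : ℝ)) (𝓝 L))
    (hN : ∀ t ∈ N,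
      Tendsto (fun ε : ℝ => f t.1 ε * f t.2.1 ε / f t.2.2 ε) (𝓝[>] (0 : ℝ)) (𝓝 0)) :
    ∃ x : Fin n → ℝ,
      (∀ t ∈ E, x t.1 + x t.2.1 = x t.2.2) ∧
      (∀ t ∈ N, x t.1 + x t.2.1 > x t.2.2) := by
  set q : Fin n × Fin n × Fin n → ℝ → ℝ := fun t ε => f t.1 ε * f t.2.1 ε / f t.2.2 ε
  set v : ℝ → Fin n → ℝ := fun ε i => -Real.log (f i ε)
  have hIoc : Set.Ioc (0 : ℝ) 1 ∈ 𝓝[>] 0 := Ioc_mem_nhdsGT zero_lt_one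
  have hv : ∀ t, (fun ε => -Real.log (q t ε)) =ᶠ[𝓝[>] 0] fun ε => tripleDefect t (v ε) :=
    fun t => by
      filter_upwards [hIoc] with ε hε
      exact (tripleDefect_neg_log t (y := (f · ε)) (hfne _ ε hε) (hfne _ ε hε) (hfne _ ε hε)).symm
  choose L hL0 hL using hE
  let A : (Fin n → ℝ) →ₗ[ℝ] (E → ℝ) := LinearMap.pi fun t => tripleDefect t.1
  have hA : Tendsto (fun ε => A (v ε)) (𝓝[>] 0) (𝓝 fun t => -Real.log (L t.1 t.2)) :=
    tendsto_pi_nhds.2 fun t => (((hL t.1 t.2).log (hL0 t.1 t.2)).neg).congr' (hv t.1)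
  have hB : ∀ t ∈ N, Tendsto (fun ε => tripleDefect t (v ε)) (𝓝[>] 0) atTop := fun t ht => by
    have hq : Tendsto (q t) (𝓝[>] 0) (𝓝[≠] 0) := by
      refine tendsto_nhdsWithin_iff.2 ⟨hN t ht, ?_⟩
      filter_upwards [hIoc] with ε hε
      exact div_ne_zero (mul_ne_zero (hfne _ ε hε) (hfne _ ε hε)) (hfne _ ε hε)
    exact (tendsto_neg_atBot_atTop.comp (Real.tendsto_log_nhdsNE_zero.comp hq)).congr' (hv t)
  obtain ⟨x, hxE, hxN⟩ := A.exists_mem_ker_forall_pos_of_tendsto tripleDefect N hA hB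
  refine ⟨x, fun t ht => ?_, fun t ht => ?_⟩
  · simpa [A, sub_eq_zero] using congr_fun (LinearMap.mem_ker.1 hxE) ⟨t, ht⟩
  · simpa using hxN t ht

/-- Compatibility of the mixed linear system `S`: if the quotients `f_i f_j / f_k`
of continuous nonvanishing functions on `(0,1]` tend to nonzero limits for triples
in `E` and to `0` for triples in `N`, then the system of equations `x_i + x_j = x_k`
over `E` and strict inequalities `x_i + x_j > x_k` over `N` has a real solution. -/
theorem mixed_linear_system_compatible
    (n : ℕ) (f : Fin n → ℝ → ℝ)
    (hfcont : ∀ i, ContinuousOn (f i) (Set.Ioc 0 1))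
    (hfne : ∀ i, ∀ ε ∈ Set.Ioc (0 : ℝ) 1, f i ε ≠ 0)
    (E N : Finset (Fin n × Fin n × Fin n))
    (hE : ∀ t ∈ E, ∃ L : ℝ, L ≠ 0 ∧
      Tendsto (fun ε : ℝ => f t.1 ε * f t.2.1 ε / f t.2.2 ε) (𝓝[>] (0 : ℝ)) (𝓝 L))
    (hN : ∀ t ∈ N,
      Tendsto (fun ε : ℝ => f t.1 ε * f t.2.1 ε / f t.2.2 ε) (𝓝[>] (0 : ℝ)) (𝓝 0)) :
    ∃ x : Fin n → ℝ,
      (∀ t ∈ E, x t.1 + x t.2.1 = x t.2.2) ∧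
      (∀ t ∈ N, x t.1 + x t.2.1 > x t.2.2) :=
  mixed_linear_system_compatible_general n f hfne E N hE hN
end

section
/- Let c : Fin n → Fin n → Fin n → ℝ be the structure constants of an n-dimensional real Lie algebra. Let Û : ℝ → Matrix (Fin n) (Fin n) ℝ be continuous on (0,1] such that each Û ε is an automorphism matrix of c (i.e., Û ε is invertible and the transformed structure constants of c under Û ε equal c), let A be a constant invertible matrix, let W ε = diagonal matrix with entries f_1(ε), …, f_n(ε) where each f_i is continuous and nonvanishing on (0,1], and let Ǔ : ℝ → Matrix (Fin n) (Fin n) ℝ be continuous on (0,1], invertible for every ε ∈ (0,1], and tending entrywise as ε → 0⁺ to an invertible matrix P. Suppose the transformed structure constants of c under U ε := (Û ε) * A * (W ε) * (Ǔ ε) tend componentwise to c₀ as ε → 0⁺. Then there exist γ : Fin n → ℝ with γ i ≠ 0 for all i and β : Fin n → ℤ such that the transformed structure constants of c under the matrix ε ↦ A * diagonal(fun i => γ i * ε ^ (β i)) * P tend componentwise to c₀ as ε → 0⁺. -/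
/-!
Since `Û_ε` are automorphisms and `Ǔ_ε → P` is invertible, the contraction reduces to the
diagonal one `W_ε = diag (f_i ε)` from `A·c` to `P⁻¹·c₀`, which rescales the structure constant
`(i, j, k)` by `f_i f_j / f_k`. It therefore suffices to find `γ ≠ 0` and integers `β` with
`γ_i γ_j / γ_k = L_{ijk}` and `β_i + β_j - β_k = 0` wherever that ratio has a nonzero limit
`L_{ijk}`, and `β_i + β_j - β_k > 0` wherever it tends to zero.

In logarithms `x_i = log |f_i ε|` these are linear problems with integer coefficients:
`x_i + x_j - x_k` converges on the first set and tends to `-∞` on the second. Finite-dimensional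
subspaces are closed, which gives `log |γ|`; the signs of `γ` are those of `f` at one small `ε`.
Normalising `x` and passing to a limit point gives a nonzero nonpositive solution on the second
set, and induction on that set gives a real `β` with the required signs (a Gordan-type
alternative). Rational solutions are dense among the real ones, so clearing denominators makes
`β` integral.
-/

open Filter Topology

noncomputable def transformedSC {n : ℕ} (U : Matrix (Fin n) (Fin n) ℝ)
    (c : Fin n → Fin n → Fin n → ℝ) : Fin n → Fin n → Fin n → ℝ :=
  fun i' j' k' => ∑ i, ∑ j, ∑ k, U i i' * U j j' * U⁻¹ k' k * c i j k

section TransformedSC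

variable {n : ℕ}

theorem transformedSC_one (c : Fin n → Fin n → Fin n → ℝ) : transformedSC 1 c = c := by
  funext i j k
  simp [transformedSC, Matrix.one_apply]

theorem transformedSC_mul (U V : Matrix (Fin n) (Fin n) ℝ) (c : Fin n → Fin n → Fin n → ℝ) :
    transformedSC (U * V) c = transformedSC V (transformedSC U c) := by
  funext i' j' k'
  -- both sides are the same sum over six indices, taken in different orders
  simp only [transformedSC, Matrix.mul_inv_rev, Matrix.mul_apply, Finset.sum_mul, Finset.mul_sum]
  simp only [← Fintype.sum_prod_type']
  exact Fintype.sum_equiv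
    { toFun := fun ⟨i, j, k, a, b, d⟩ => (d, b, a, i, j, k)
      invFun := fun ⟨d, b, a, i, j, k⟩ => (i, j, k, a, b, d) } _ _ fun _ => by dsimp; ring

theorem transformedSC_inv_transformedSC {U : Matrix (Fin n) (Fin n) ℝ} (hU : IsUnit U)
    (c : Fin n → Fin n → Fin n → ℝ) : transformedSC U⁻¹ (transformedSC U c) = c := by
  rw [← transformedSC_mul, Matrix.mul_nonsing_inv U ((Matrix.isUnit_iff_isUnit_det U).1 hU),
    transformedSC_one]

theorem transformedSC_transformedSC_inv {U : Matrix (Fin n) (Fin n) ℝ} (hU : IsUnit U)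
    (c : Fin n → Fin n → Fin n → ℝ) : transformedSC U (transformedSC U⁻¹ c) = c := by
  rw [← transformedSC_mul, Matrix.nonsing_inv_mul U ((Matrix.isUnit_iff_isUnit_det U).1 hU),
    transformedSC_one]

theorem transformedSC_diagonal {d : Fin n → ℝ} (hd : ∀ i, d i ≠ 0) (c : Fin n → Fin n → Fin n → ℝ)
    (i j k : Fin n) :
    transformedSC (Matrix.diagonal d) c i j k = d i * d j * (d k)⁻¹ * c i j k := by
  have hinv : (Matrix.diagonal d)⁻¹ = Matrix.diagonal d⁻¹ :=
    Matrix.inv_eq_left_inv (by simp [hd])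
  simp [transformedSC, hinv, Matrix.diagonal_apply]

end TransformedSC

theorem Filter.Tendsto.matrix_inv {α m : Type*} [Fintype m] [DecidableEq m] {l : Filter α}
    {U : α → Matrix m m ℝ} {U₀ : Matrix m m ℝ}
    (hU : Tendsto U l (𝓝 U₀)) (hU₀ : IsUnit U₀) : Tendsto (fun a => (U a)⁻¹) l (𝓝 U₀⁻¹) := by
  refine (continuousAt_matrix_inv U₀ ?_).tendsto.comp hU
  simpa [Ring.inverse_eq_inv'] using
    continuousAt_inv₀ ((Matrix.isUnit_iff_isUnit_det U₀).1 hU₀).ne_zero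

theorem Filter.Tendsto.transformedSC {α : Type*} {n : ℕ} {l : Filter α}
    {U : α → Matrix (Fin n) (Fin n) ℝ} {U₀ : Matrix (Fin n) (Fin n) ℝ}
    {c : α → Fin n → Fin n → Fin n → ℝ} {c₀ : Fin n → Fin n → Fin n → ℝ}
    (hU : Tendsto U l (𝓝 U₀)) (hU₀ : IsUnit U₀) (hc : Tendsto c l (𝓝 c₀)) :
    Tendsto (fun a => transformedSC (U a) (c a)) l (𝓝 (transformedSC U₀ c₀)) := by
  have hinv := hU.matrix_inv hU₀
  have entry {M : α → Matrix (Fin n) (Fin n) ℝ} {M₀} (h : Tendsto M l (𝓝 M₀)) (i j) :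
      Tendsto (fun a => M a i j) l (𝓝 (M₀ i j)) :=
    tendsto_pi_nhds.1 (tendsto_pi_nhds.1 h i) j
  refine tendsto_pi_nhds.2 fun i' => tendsto_pi_nhds.2 fun j' => tendsto_pi_nhds.2 fun k' => ?_
  refine tendsto_finsetSum _ fun i _ => tendsto_finsetSum _ fun j _ =>
    tendsto_finsetSum _ fun k _ => ?_
  exact (((entry hU i i').mul (entry hU j j')).mul (entry hinv k' k)).mul
    (tendsto_pi_nhds.1 (tendsto_pi_nhds.1 (tendsto_pi_nhds.1 hc i) j) k)

section LinearInequalities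

variable {V E α : Type*} [AddCommGroup E] [Module ℝ E] (φ : V → E →ₗ[ℝ] ℝ)

theorem exists_forall_apply_eq_of_tendsto {l : Filter α} [l.NeBot] (S : Finset V) {x : α → E}
    {y : V → ℝ} (h : ∀ t ∈ S, Tendsto (fun a => φ t (x a)) l (𝓝 (y t))) :
    ∃ b, ∀ t ∈ S, φ t b = y t := by
  let T : E →ₗ[ℝ] S → ℝ := LinearMap.pi fun t => φ t
  have hT : Tendsto (fun a => T (x a)) l (𝓝 fun t => y t) :=
    tendsto_pi_nhds.2 fun t => h t t.2
  obtain ⟨b, hb⟩ : (fun t : S => y t) ∈ LinearMap.range T :=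
    (LinearMap.range T).closed_of_finiteDimensional.mem_of_tendsto hT
      (Eventually.of_forall fun a => ⟨x a, rfl⟩)
  exact ⟨b, fun t ht => congrFun hb ⟨t, ht⟩⟩

theorem exists_eq_zero_nonpos_exists_neg_of_tendsto {l : Filter α} [l.NeBot] {S₀ s : Finset V}
    {x : α → E} (h₀ : ∀ t ∈ S₀, Tendsto (fun a => φ t (x a)) l (𝓝 0))
    (hs : ∀ t ∈ s, ∀ᶠ a in l, φ t (x a) ∈ Set.Icc (-1) 0)
    (hsum : Tendsto (fun a => ∑ t ∈ s, |φ t (x a)|) l (𝓝 1)) :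
    ∃ b, (∀ t ∈ S₀, φ t b = 0) ∧ (∀ t ∈ s, φ t b ≤ 0) ∧ ∃ t ∈ s, φ t b < 0 := by
  classical
  set 𝒰 := Ultrafilter.of l
  have h𝒰 : (𝒰 : Filter α) ≤ l := Ultrafilter.of_le l
  have hy : ∀ t ∈ S₀ ∪ s, ∃ y, (t ∈ S₀ → y = 0) ∧ (t ∈ s → y ∈ Set.Icc (-1) 0) ∧
      Tendsto (fun a => φ t (x a)) 𝒰 (𝓝 y) := fun t ht => by
    by_cases ht₀ : t ∈ S₀
    · exact ⟨0, fun _ => rfl, fun _ => by norm_num, (h₀ t ht₀).mono_left h𝒰⟩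
    obtain ⟨y, hyK, hy⟩ := isCompact_Icc.ultrafilter_le_nhds (𝒰.map fun a => φ t (x a))
      (le_principal_iff.2 (h𝒰 (hs t ((Finset.mem_union.1 ht).resolve_left ht₀))))
    exact ⟨y, fun h => absurd h ht₀, fun _ => hyK, hy⟩
  choose! y hy₀ hys hyt using hy
  obtain ⟨b, hb⟩ := exists_forall_apply_eq_of_tendsto φ (S₀ ∪ s) hyt
  have hb_s : ∀ t ∈ s, φ t b = y t := fun t ht => hb t (Finset.mem_union_right _ ht)
  have hy_s : ∀ t ∈ s, y t ∈ Set.Icc (-1) 0 := fun t ht =>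
    hys t (Finset.mem_union_right _ ht) ht
  have hy_sum : ∑ t ∈ s, |y t| = 1 :=
    tendsto_nhds_unique (tendsto_finsetSum s fun t ht =>
      (hyt t (Finset.mem_union_right _ ht)).abs) (hsum.mono_left h𝒰)
  obtain ⟨t, ht, hyt0⟩ := Finset.exists_ne_zero_of_sum_ne_zero (hy_sum ▸ one_ne_zero)
  refine ⟨b, fun t ht => (hb t (Finset.mem_union_left _ ht)).trans
    (hy₀ t (Finset.mem_union_left _ ht) ht), fun t ht => hb_s t ht ▸ (hy_s t ht).2, t, ht, ?_⟩
  rw [hb_s t ht]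
  exact lt_of_le_of_ne (hy_s t ht).2 (abs_ne_zero.1 hyt0)

theorem exists_eq_zero_nonpos_exists_neg_of_tendsto_atBot {l : Filter α} [l.NeBot]
    {S₀ s : Finset V} {x : α → E}
    (h₀ : ∀ t ∈ S₀, IsBoundedUnder (· ≤ ·) l fun a => ‖φ t (x a)‖)
    (hs : ∀ t ∈ s, Tendsto (fun a => φ t (x a)) l atBot) (hne : s.Nonempty) :
    ∃ b, (∀ t ∈ S₀, φ t b = 0) ∧ (∀ t ∈ s, φ t b ≤ 0) ∧ ∃ t ∈ s, φ t b < 0 := by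
  set M : α → ℝ := fun a => 1 + ∑ t ∈ s, |φ t (x a)|
  have hM_pos : ∀ a, 0 < M a := fun a => by positivity
  have hle : ∀ t ∈ s, ∀ a, 1 + |φ t (x a)| ≤ M a := fun t ht a => by
    simp only [M]
    gcongr
    exact Finset.single_le_sum (f := fun t => |φ t (x a)|) (fun t _ => abs_nonneg _) ht
  have hM : Tendsto M l atTop := by
    obtain ⟨t₀, ht₀⟩ := hne
    exact tendsto_atTop_mono (hle t₀ ht₀)
      (tendsto_atTop_add_const_left _ 1 (tendsto_abs_atBot_atTop.comp (hs t₀ ht₀)))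
  refine exists_eq_zero_nonpos_exists_neg_of_tendsto φ (l := l) (x := fun a => (M a)⁻¹ • x a)
    (fun t ht => ?_) (fun t ht => ?_) ?_ <;> simp only [map_smul, smul_eq_mul]
  · exact hM.inv_tendsto_atTop.zero_mul_isBoundedUnder_le (h₀ t ht)
  · filter_upwards [(hs t ht).eventually_le_atBot 0] with a ha
    rw [Set.mem_Icc, le_inv_mul_iff₀ (hM_pos a)]
    exact ⟨by linarith [neg_abs_le (φ t (x a)), hle t ht a],
      mul_nonpos_of_nonneg_of_nonpos (inv_nonneg.2 (hM_pos a).le) ha⟩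
  · have hsum : ∀ a, ∑ t ∈ s, |(M a)⁻¹ * φ t (x a)| = 1 - (M a)⁻¹ := fun a => by
      simp only [abs_mul, abs_inv, abs_of_pos (hM_pos a), ← Finset.mul_sum]
      field_simp [(hM_pos a).ne']
      simp [M]
    simpa only [hsum, sub_zero, Pi.inv_apply] using tendsto_const_nhds.sub hM.inv_tendsto_atTop

theorem eventually_forall_apply_add_smul_neg {s : Finset V} {b₁ b₂ : E}
    (h : ∀ t ∈ s, φ t b₁ < 0 ∨ φ t b₁ = 0 ∧ φ t b₂ < 0) :
    ∀ᶠ δ in 𝓝[>] (0 : ℝ), ∀ t ∈ s, φ t (b₁ + δ • b₂) < 0 := by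
  refine (eventually_all_finset s).2 fun t ht => ?_
  simp only [map_add, map_smul, smul_eq_mul]
  rcases h t ht with h | ⟨h₁, h₂⟩
  · have : Tendsto (fun δ : ℝ => φ t b₁ + δ * φ t b₂) (𝓝[>] 0) (𝓝 (φ t b₁)) := by
      refine tendsto_nhdsWithin_of_tendsto_nhds ?_
      exact (by fun_prop : Continuous fun δ : ℝ => φ t b₁ + δ * φ t b₂).tendsto' 0 _ (by simp)
    exact this.eventually (eventually_lt_nhds h)
  · filter_upwards [self_mem_nhdsWithin] with δ hδ
    rw [h₁, zero_add]
    exact mul_neg_of_pos_of_neg hδ h₂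

theorem exists_eq_zero_and_neg_of_tendsto_atBot {l : Filter α} [l.NeBot] {S₀ Sp : Finset V}
    {x : α → E} (h₀ : ∀ t ∈ S₀, IsBoundedUnder (· ≤ ·) l fun a => ‖φ t (x a)‖)
    (hp : ∀ t ∈ Sp, Tendsto (fun a => φ t (x a)) l atBot) :
    ∃ b, (∀ t ∈ S₀, φ t b = 0) ∧ ∀ t ∈ Sp, φ t b < 0 := by
  classical
  induction Sp using Finset.strongInduction with
  | H s ih =>
    rcases s.eq_empty_or_nonempty with rfl | hne
    · exact ⟨0, by simp, by simp⟩
    obtain ⟨b₁, hb₁₀, hb₁s, t₁, ht₁, ht₁neg⟩ :=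
      exists_eq_zero_nonpos_exists_neg_of_tendsto_atBot φ h₀ hp hne
    obtain ⟨b₂, hb₂₀, hb₂s⟩ := ih (s.filter fun t => φ t b₁ = 0)
      (Finset.filter_ssubset.2 ⟨t₁, ht₁, ht₁neg.ne⟩)
      fun t ht => hp t (Finset.mem_of_mem_filter t ht)
    obtain ⟨δ, hδ⟩ := (eventually_forall_apply_add_smul_neg φ (s := s) (b₁ := b₁) (b₂ := b₂)
      fun t ht => (hb₁s t ht).lt_or_eq.imp_right
        fun h => ⟨h, hb₂s t (Finset.mem_filter.2 ⟨ht, h⟩)⟩).exists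
    exact ⟨b₁ + δ • b₂, fun t ht => by simp [hb₁₀ t ht, hb₂₀ t ht], hδ⟩

end LinearInequalities

section IntegerForms

variable {ι V : Type*} [Fintype ι]

def intLinearForm (R : Type*) [Ring R] (w : ι → ℤ) : (ι → R) →ₗ[R] R :=
  ∑ l, w l • LinearMap.proj l

theorem intLinearForm_apply {R : Type*} [Ring R] (w : ι → ℤ) (v : ι → R) :
    intLinearForm R w v = ∑ l, w l • v l := by
  simp [intLinearForm]

theorem map_intLinearForm {R S : Type*} [Ring R] [Ring S] (f : R →+* S) (w : ι → ℤ)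
    (v : ι → R) : f (intLinearForm R w v) = intLinearForm S w (fun l => f (v l)) := by
  simp [intLinearForm_apply]

theorem ratCast_intLinearForm (w : ι → ℤ) (q : ι → ℚ) :
    ((intLinearForm ℚ w q : ℚ) : ℝ) = intLinearForm ℝ w (fun l => (q l : ℝ)) :=
  map_intLinearForm (Rat.castHom ℝ) w q

theorem exists_pos_nat_mul_eq_intCast (q : ι → ℚ) :
    ∃ D : ℕ, 0 < D ∧ ∃ β : ι → ℤ, ∀ l, (β l : ℚ) = D * q l := by
  refine ⟨∏ l, (q l).den, Finset.prod_pos fun l _ => (q l).den_pos, ?_⟩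
  choose k hk using fun l => Finset.dvd_prod_of_mem (fun m => (q m).den) (Finset.mem_univ l)
  refine ⟨fun l => k l * (q l).num, fun l => ?_⟩
  rw [hk l]
  push_cast
  rw [← Rat.den_mul_eq_num]
  ring

theorem mem_closure_rat_solutions (W : V → ι → ℤ) (S : Finset V) {b : ι → ℝ}
    (hb : ∀ t ∈ S, intLinearForm ℝ (W t) b = 0) :
    b ∈ closure ((fun q l => (q l : ℝ)) ''
      {q : ι → ℚ | ∀ t ∈ S, intLinearForm ℚ (W t) q = 0}) := by
  classical
  induction S using Finset.induction_on with
  | empty =>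
    simpa [Set.image_univ] using
      (DenseRange.piMap fun _ : ι => Rat.denseRange_cast (𝕜 := ℝ)).closure_range ▸ Set.mem_univ b
  | insert t₀ S _ ih =>
    have ih := ih fun t ht => hb t (Finset.mem_insert_of_mem ht)
    by_cases h : ∃ u : ι → ℚ, (∀ t ∈ S, intLinearForm ℚ (W t) u = 0) ∧
        intLinearForm ℚ (W t₀) u ≠ 0
    · obtain ⟨u, hu, hr⟩ := h
      set r := intLinearForm ℚ (W t₀) u
      -- projection onto the solutions of the new equation along the rational direction `u`
      let g : (ι → ℝ) →ₗ[ℝ] ι → ℝ :=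
        LinearMap.id - (r⁻¹ : ℝ) • (intLinearForm ℝ (W t₀)).smulRight fun l => (u l : ℝ)
      have hgb : g b = b := by simp [g, hb t₀ (Finset.mem_insert_self _ _)]
      rw [← hgb]
      refine map_mem_closure (LinearMap.continuous_of_finiteDimensional g) ih ?_
      rintro _ ⟨q, hq, rfl⟩
      refine ⟨q - (r⁻¹ * intLinearForm ℚ (W t₀) q) • u, fun t ht => ?_, ?_⟩
      · rcases Finset.mem_insert.1 ht with rfl | ht
        · simp only [map_sub, map_smul, smul_eq_mul]
          field_simp
          ring
        · simp [hq t ht, hu t ht]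
      · ext l
        simp [g, ← ratCast_intLinearForm, mul_assoc]
    · push Not at h
      refine closure_mono (Set.image_mono fun q hq t ht => ?_) ih
      rcases Finset.mem_insert.1 ht with rfl | ht
      exacts [h q hq, hq t ht]

theorem exists_int_of_real_eq_zero_and_neg (W : V → ι → ℤ) {S₀ Sp : Finset V} {b : ι → ℝ}
    (hb₀ : ∀ t ∈ S₀, intLinearForm ℝ (W t) b = 0) (hbp : ∀ t ∈ Sp, intLinearForm ℝ (W t) b < 0) :
    ∃ β : ι → ℤ, (∀ t ∈ S₀, intLinearForm ℤ (W t) β = 0) ∧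
      ∀ t ∈ Sp, intLinearForm ℤ (W t) β < 0 := by
  have hO : IsOpen {v : ι → ℝ | ∀ t ∈ Sp, intLinearForm ℝ (W t) v < 0} := by
    simp only [Set.ofPred_forall]
    exact isOpen_biInter_finset fun t _ =>
      isOpen_lt (LinearMap.continuous_of_finiteDimensional _) continuous_const
  obtain ⟨_, hqp, q, hq₀, rfl⟩ :=
    mem_closure_iff.1 (mem_closure_rat_solutions W S₀ hb₀) _ hO hbp
  obtain ⟨D, hD, β, hβ⟩ := exists_pos_nat_mul_eq_intCast q
  have hβq : ∀ t, (intLinearForm ℤ (W t) β : ℚ) = D * intLinearForm ℚ (W t) q := fun t => by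
    have := map_intLinearForm (Int.castRingHom ℚ) (W t) β
    simp only [eq_intCast, hβ] at this
    rw [this, ← smul_eq_mul, ← map_smul]
    rfl
  refine ⟨β, fun t ht => ?_, fun t ht => ?_⟩
  · have : (intLinearForm ℤ (W t) β : ℚ) = 0 := by rw [hβq, hq₀ t ht, mul_zero]
    exact_mod_cast this
  · have hqt : (intLinearForm ℚ (W t) q : ℝ) < 0 := ratCast_intLinearForm (W t) q ▸ hqp t ht
    have : (intLinearForm ℤ (W t) β : ℚ) < 0 :=
      (hβq t).symm ▸ mul_neg_of_pos_of_neg (by exact_mod_cast hD) (by exact_mod_cast hqt)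
    exact_mod_cast this

end IntegerForms

section Triples

variable {ι : Type*}

def tripleWeight [DecidableEq ι] (t : ι × ι × ι) : ι → ℤ :=
  Pi.single t.1 1 + Pi.single t.2.1 1 - Pi.single t.2.2 1

noncomputable def tripleRatio (v : ι → ℝ) (t : ι × ι × ι) : ℝ :=
  v t.1 * v t.2.1 * (v t.2.2)⁻¹

theorem tripleRatio_ne_zero {v : ι → ℝ} (hv : ∀ i, v i ≠ 0) (t : ι × ι × ι) :
    tripleRatio v t ≠ 0 :=
  mul_ne_zero (mul_ne_zero (hv _) (hv _)) (inv_ne_zero (hv _))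

variable [Fintype ι] [DecidableEq ι]

theorem intLinearForm_tripleWeight {R : Type*} [Ring R] (t : ι × ι × ι) (v : ι → R) :
    intLinearForm R (tripleWeight t) v = v t.1 + v t.2.1 - v t.2.2 := by
  simp [intLinearForm_apply, tripleWeight, sub_smul, add_smul, Finset.sum_add_distrib,
    Finset.sum_sub_distrib, Pi.single_apply]

theorem intLinearForm_tripleWeight_log_abs {v : ι → ℝ} (hv : ∀ i, v i ≠ 0) (t : ι × ι × ι) :
    intLinearForm ℝ (tripleWeight t) (fun i => Real.log |v i|) = Real.log |tripleRatio v t| := by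
  rw [intLinearForm_tripleWeight, tripleRatio, abs_mul, abs_mul, abs_inv,
    Real.log_mul (by positivity [hv t.1, hv t.2.1]) (by positivity [hv t.2.2]),
    Real.log_mul (by positivity [hv t.1]) (by positivity [hv t.2.1]), Real.log_inv]
  ring

section Limits

variable {α : Type*} {l : Filter α} [l.NeBot] {v : α → ι → ℝ}

theorem exists_tripleRatio_eq_of_tendsto (hv : ∀ᶠ a in l, ∀ i, v a i ≠ 0)
    {S : Finset (ι × ι × ι)} {L : ι × ι × ι → ℝ} (hL : ∀ t ∈ S, L t ≠ 0)
    (h : ∀ t ∈ S, Tendsto (fun a => tripleRatio (v a) t) l (𝓝 (L t))) :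
    ∃ γ : ι → ℝ, (∀ i, γ i ≠ 0) ∧ ∀ t ∈ S, tripleRatio γ t = L t := by
  set x : α → ι → ℝ := fun a i => Real.log |v a i|
  have hx : ∀ t ∈ S, Tendsto (fun a => intLinearForm ℝ (tripleWeight t) (x a)) l
      (𝓝 (Real.log |L t|)) := fun t ht =>
    ((h t ht).abs.log (abs_ne_zero.2 (hL t ht))).congr'
      (hv.mono fun a ha => (intLinearForm_tripleWeight_log_abs ha t).symm)
  obtain ⟨b, hb⟩ := exists_forall_apply_eq_of_tendsto _ S hx
  obtain ⟨a₀, hv₀, hsign⟩ := (hv.and ((eventually_all_finset S).2 fun t ht =>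
    (h t ht).eventually ((continuous_id.mul continuous_const).isOpen_preimage _ isOpen_Ioi
      |>.mem_nhds (show 0 < L t * L t from mul_self_pos.2 (hL t ht))))).exists
  -- the signs are read off at one point `a₀`, the moduli from the limit
  refine ⟨fun i => v a₀ i * Real.exp (b i - x a₀ i), fun i => mul_ne_zero (hv₀ i)
    (Real.exp_ne_zero _), fun t ht => ?_⟩
  have hb' := hb t ht
  rw [intLinearForm_tripleWeight] at hb'
  have hx₀ := intLinearForm_tripleWeight_log_abs hv₀ t
  rw [intLinearForm_tripleWeight] at hx₀
  set R := tripleRatio (v a₀) t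
  have hRL : 0 < R * L t := hsign t ht
  have hR : R ≠ 0 := left_ne_zero_of_mul hRL.ne'
  calc tripleRatio _ t = R * Real.exp (Real.log |L t| - Real.log |R|) := by
        rw [← hb', ← hx₀]
        simp only [R, x, tripleRatio, Real.exp_sub, Real.exp_add]
        field_simp
    _ = R * |L t| / |R| := by
        rw [Real.exp_sub, Real.exp_log (abs_pos.2 (hL t ht)), Real.exp_log (abs_pos.2 hR)]
        ring
    _ = L t := by
        rcases pos_and_pos_or_neg_and_neg_of_mul_pos hRL with ⟨h₁, h₂⟩ | ⟨h₁, h₂⟩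
        · rw [abs_of_pos h₁, abs_of_pos h₂]
          field_simp
        · rw [abs_of_neg h₁, abs_of_neg h₂]
          field_simp

theorem exists_int_exponent_of_tendsto (hv : ∀ᶠ a in l, ∀ i, v a i ≠ 0)
    {S₀ Sp : Finset (ι × ι × ι)} {L : ι × ι × ι → ℝ} (hL : ∀ t ∈ S₀, L t ≠ 0)
    (h₀ : ∀ t ∈ S₀, Tendsto (fun a => tripleRatio (v a) t) l (𝓝 (L t)))
    (hp : ∀ t ∈ Sp, Tendsto (fun a => tripleRatio (v a) t) l (𝓝 0)) :
    ∃ β : ι → ℤ, (∀ t ∈ S₀, β t.1 + β t.2.1 - β t.2.2 = 0) ∧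
      ∀ t ∈ Sp, 0 < β t.1 + β t.2.1 - β t.2.2 := by
  set x : α → ι → ℝ := fun a i => Real.log |v a i|
  have hx : ∀ᶠ a in l, ∀ t, Real.log |tripleRatio (v a) t| =
      intLinearForm ℝ (tripleWeight t) (x a) :=
    hv.mono fun a ha t => (intLinearForm_tripleWeight_log_abs ha t).symm
  have hx₀ : ∀ t ∈ S₀, IsBoundedUnder (· ≤ ·) l
      fun a => ‖intLinearForm ℝ (tripleWeight t) (x a)‖ := fun t ht =>
    (((h₀ t ht).abs.log (abs_ne_zero.2 (hL t ht))).congr' (hx.mono fun a ha => ha t)).norm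
      |>.isBoundedUnder_le
  have hxp : ∀ t ∈ Sp, Tendsto (fun a => intLinearForm ℝ (tripleWeight t) (x a)) l atBot :=
    fun t ht => (Real.tendsto_log_nhdsGT_zero.comp (tendsto_nhdsWithin_iff.2
      ⟨by simpa using (hp t ht).abs, hv.mono fun a ha => abs_pos.2 (tripleRatio_ne_zero ha t)⟩)
      ).congr' (hx.mono fun a ha => ha t)
  obtain ⟨b, hb₀, hbp⟩ := exists_eq_zero_and_neg_of_tendsto_atBot _ hx₀ hxp
  obtain ⟨β, hβ₀, hβp⟩ := exists_int_of_real_eq_zero_and_neg tripleWeight hb₀ hbp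
  simp only [intLinearForm_tripleWeight] at hβ₀ hβp
  exact ⟨-β, fun t ht => by simp only [Pi.neg_apply]; linarith [hβ₀ t ht],
    fun t ht => by simp only [Pi.neg_apply]; linarith [hβp t ht]⟩

end Limits

theorem exists_genIW_of_tendsto_tripleRatio {v : ℝ → ι → ℝ}
    (hv : ∀ᶠ ε in 𝓝[>] (0 : ℝ), ∀ i, v ε i ≠ 0) {C D : ι × ι × ι → ℝ}
    (h : ∀ t, Tendsto (fun ε => tripleRatio (v ε) t * C t) (𝓝[>] 0) (𝓝 (D t))) :
    ∃ γ : ι → ℝ, (∀ i, γ i ≠ 0) ∧ ∃ β : ι → ℤ, ∀ t, Tendsto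
      (fun ε : ℝ => tripleRatio γ t * ε ^ (β t.1 + β t.2.1 - β t.2.2) * C t) (𝓝[>] 0)
      (𝓝 (D t)) := by
  have hD : ∀ t, C t = 0 → D t = 0 := fun t ht =>
    tendsto_nhds_unique (h t) (by simp only [ht, mul_zero]; exact tendsto_const_nhds)
  have hratio : ∀ t, C t ≠ 0 →
      Tendsto (fun ε => tripleRatio (v ε) t) (𝓝[>] 0) (𝓝 (D t / C t)) :=
    fun t ht => ((h t).div_const (C t)).congr fun ε => mul_div_cancel_right₀ _ ht
  set S₀ := Finset.univ.filter fun t => C t ≠ 0 ∧ D t ≠ 0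
  set Sp := Finset.univ.filter fun t => C t ≠ 0 ∧ D t = 0
  have hS₀ : ∀ t ∈ S₀, C t ≠ 0 ∧ D t ≠ 0 := fun t ht => (Finset.mem_filter.1 ht).2
  have hL : ∀ t ∈ S₀, D t / C t ≠ 0 := fun t ht => div_ne_zero (hS₀ t ht).2 (hS₀ t ht).1
  obtain ⟨γ, hγ, hγS₀⟩ := exists_tripleRatio_eq_of_tendsto hv hL
    fun t ht => hratio t (hS₀ t ht).1
  obtain ⟨β, hβ₀, hβp⟩ := exists_int_exponent_of_tendsto hv hL
    (fun t ht => hratio t (hS₀ t ht).1) (Sp := Sp) fun t ht => by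
      obtain ⟨hC, hDt⟩ := (Finset.mem_filter.1 ht).2
      simpa [hDt] using hratio t hC
  refine ⟨γ, hγ, β, fun t => ?_⟩
  by_cases hC : C t = 0
  · simp only [hC, hD t hC, mul_zero]
    exact tendsto_const_nhds
  by_cases hDt : D t = 0
  · have hm := hβp t (Finset.mem_filter.2 ⟨Finset.mem_univ _, hC, hDt⟩)
    have hpow : Tendsto (fun ε : ℝ => ε ^ (β t.1 + β t.2.1 - β t.2.2)) (𝓝[>] 0) (𝓝 0) := by
      simpa only [zero_zpow _ hm.ne'] using
        ((continuousAt_zpow₀ (0 : ℝ) _ (Or.inr hm.le)).tendsto.mono_left nhdsWithin_le_nhds)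
    simpa [hDt] using (hpow.const_mul (tripleRatio γ t)).mul_const (C t)
  · have ht : t ∈ S₀ := Finset.mem_filter.2 ⟨Finset.mem_univ _, hC, hDt⟩
    simp only [hβ₀ t ht, hγS₀ t ht, zpow_zero, mul_one, div_mul_cancel₀ _ hC]
    exact tendsto_const_nhds

end Triples

theorem exists_genIW_of_tendsto_transformedSC_diagonal {n : ℕ} {f : Fin n → ℝ → ℝ}
    (hf : ∀ᶠ ε in 𝓝[>] (0 : ℝ), ∀ i, f i ε ≠ 0) {c d : Fin n → Fin n → Fin n → ℝ}
    (h : Tendsto (fun ε => transformedSC (Matrix.diagonal fun i => f i ε) c) (𝓝[>] 0) (𝓝 d)) :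
    ∃ γ : Fin n → ℝ, (∀ i, γ i ≠ 0) ∧ ∃ β : Fin n → ℤ, Tendsto
      (fun ε : ℝ => transformedSC (Matrix.diagonal fun i => γ i * ε ^ β i) c) (𝓝[>] 0) (𝓝 d) := by
  obtain ⟨γ, hγ, β, hγβ⟩ := exists_genIW_of_tendsto_tripleRatio (v := fun ε i => f i ε) hf
    (C := fun t => c t.1 t.2.1 t.2.2) (D := fun t => d t.1 t.2.1 t.2.2) fun t =>
      (tendsto_pi_nhds.1 (tendsto_pi_nhds.1 (tendsto_pi_nhds.1 h t.1) t.2.1) t.2.2).congr'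
        (hf.mono fun ε hε => transformedSC_diagonal hε c _ _ _)
  refine ⟨γ, hγ, β, tendsto_pi_nhds.2 fun i => tendsto_pi_nhds.2 fun j =>
    tendsto_pi_nhds.2 fun k => (hγβ (i, j, k)).congr'
      (eventually_nhdsWithin_of_forall fun ε (hε : 0 < ε) => ?_)⟩
  dsimp only
  rw [transformedSC_diagonal fun i => mul_ne_zero (hγ i) (zpow_ne_zero _ hε.ne'),
    zpow_sub₀ hε.ne', zpow_add₀ hε.ne']
  simp only [tripleRatio]
  field_simp

theorem extended_diagonal_contraction_equiv_genIW_integer_general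
    (n : ℕ) (c c₀ : Fin n → Fin n → Fin n → ℝ)
    (Uhat Ucheck : ℝ → Matrix (Fin n) (Fin n) ℝ)
    (A P : Matrix (Fin n) (Fin n) ℝ)
    (f : Fin n → ℝ → ℝ)
    (hUhatAut : ∀ ε ∈ Set.Ioc (0 : ℝ) 1, IsUnit (Uhat ε) ∧ transformedSC (Uhat ε) c = c)
    (hfne : ∀ i, ∀ ε ∈ Set.Ioc (0 : ℝ) 1, f i ε ≠ 0)
    (hUcheckInv : ∀ ε ∈ Set.Ioc (0 : ℝ) 1, IsUnit (Ucheck ε))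
    (hUcheckLim : ∀ i j, Tendsto (fun ε : ℝ => Ucheck ε i j) (𝓝[>] (0 : ℝ)) (𝓝 (P i j)))
    (hP : IsUnit P)
    (hlim : ∀ i' j' k', Tendsto
      (fun ε : ℝ => transformedSC
        (Uhat ε * A * Matrix.diagonal (fun i => f i ε) * Ucheck ε) c i' j' k')
      (𝓝[>] (0 : ℝ)) (𝓝 (c₀ i' j' k'))) :
    ∃ γ : Fin n → ℝ, (∀ i, γ i ≠ 0) ∧ ∃ β : Fin n → ℤ, ∀ i' j' k',
      Tendsto (fun ε : ℝ => transformedSC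
          (A * Matrix.diagonal (fun i => γ i * ε ^ (β i)) * P) c i' j' k')
        (𝓝[>] (0 : ℝ)) (𝓝 (c₀ i' j' k')) := by
  have hIoc : ∀ᶠ ε in 𝓝[>] (0 : ℝ), ε ∈ Set.Ioc 0 1 := Ioc_mem_nhdsGT one_pos
  have hUcheck : Tendsto Ucheck (𝓝[>] 0) (𝓝 P) :=
    tendsto_pi_nhds.2 fun i => tendsto_pi_nhds.2 (hUcheckLim i)
  have hdiag : Tendsto (fun ε => transformedSC (Matrix.diagonal fun i => f i ε)
      (transformedSC A c)) (𝓝[>] 0) (𝓝 (transformedSC P⁻¹ c₀)) := by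
    refine ((hUcheck.matrix_inv hP).transformedSC (Matrix.isUnit_nonsing_inv_iff.2 hP)
      (tendsto_pi_nhds.2 fun i => tendsto_pi_nhds.2 fun j => tendsto_pi_nhds.2 (hlim i j))).congr'
      (hIoc.mono fun ε hε => ?_)
    rw [transformedSC_mul, transformedSC_mul, transformedSC_mul, (hUhatAut ε hε).2,
      transformedSC_inv_transformedSC (hUcheckInv ε hε)]
  obtain ⟨γ, hγ, β, hγβ⟩ := exists_genIW_of_tendsto_transformedSC_diagonal
    (hIoc.mono fun ε hε i => hfne i ε hε) hdiag
  have hP_lim := (tendsto_const_nhds (x := P)).transformedSC hP hγβ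
  rw [transformedSC_transformedSC_inv hP] at hP_lim
  refine ⟨γ, hγ, β, fun i' j' k' => ?_⟩
  simpa only [transformedSC_mul] using
    tendsto_pi_nhds.1 (tendsto_pi_nhds.1 (tendsto_pi_nhds.1 hP_lim i') j') k'

/-- Any contraction whose matrix has the form `Û_ε A W_ε Ǔ_ε`, with `Û_ε`
automorphism matrices of the initial algebra, `A` constant invertible,
`W_ε` diagonal with continuous nonvanishing entries, and `Ǔ_ε` converging to an
invertible matrix `P`, is equivalent to a generalized Inönü–Wigner contraction
with an integer signature. -/
theorem extended_diagonal_contraction_equiv_genIW_integer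
    (n : ℕ) (c c₀ : Fin n → Fin n → Fin n → ℝ)
    (hanti : ∀ i j k, c i j k = -(c j i k))
    (hjac : ∀ i j k m, ∑ l, (c i j l * c l k m + c k i l * c l j m + c j k l * c l i m) = 0)
    (Uhat Ucheck : ℝ → Matrix (Fin n) (Fin n) ℝ)
    (A P : Matrix (Fin n) (Fin n) ℝ)
    (f : Fin n → ℝ → ℝ)
    (hUhatCont : ContinuousOn Uhat (Set.Ioc 0 1))
    (hUhatAut : ∀ ε ∈ Set.Ioc (0 : ℝ) 1, IsUnit (Uhat ε) ∧ transformedSC (Uhat ε) c = c)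
    (hA : IsUnit A)
    (hfcont : ∀ i, ContinuousOn (f i) (Set.Ioc 0 1))
    (hfne : ∀ i, ∀ ε ∈ Set.Ioc (0 : ℝ) 1, f i ε ≠ 0)
    (hUcheckCont : ContinuousOn Ucheck (Set.Ioc 0 1))
    (hUcheckInv : ∀ ε ∈ Set.Ioc (0 : ℝ) 1, IsUnit (Ucheck ε))
    (hUcheckLim : ∀ i j, Tendsto (fun ε : ℝ => Ucheck ε i j) (𝓝[>] (0 : ℝ)) (𝓝 (P i j)))
    (hP : IsUnit P)
    (hlim : ∀ i' j' k', Tendsto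
      (fun ε : ℝ => transformedSC
        (Uhat ε * A * Matrix.diagonal (fun i => f i ε) * Ucheck ε) c i' j' k')
      (𝓝[>] (0 : ℝ)) (𝓝 (c₀ i' j' k'))) :
    ∃ γ : Fin n → ℝ, (∀ i, γ i ≠ 0) ∧ ∃ β : Fin n → ℤ, ∀ i' j' k',
      Tendsto (fun ε : ℝ => transformedSC
          (A * Matrix.diagonal (fun i => γ i * ε ^ (β i)) * P) c i' j' k')
        (𝓝[>] (0 : ℝ)) (𝓝 (c₀ i' j' k')) :=
  extended_diagonal_contraction_equiv_genIW_integer_general n c c₀ Uhat Ucheck A P f hUhatAut hfne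
    hUcheckInv hUcheckLim hP hlim
end

section
/- Let c : Fin n → Fin n → Fin n → ℝ be the structure constants of an n-dimensional real Lie algebra, let f : Fin n → ℝ → ℝ be such that each f i is continuous on (0,1] and f i ε ≠ 0 for every ε ∈ (0,1], and let c₀ : Fin n → Fin n → Fin n → ℝ be such that for all i, j, k the function ε ↦ c i j k * (f i ε) * (f j ε) / (f k ε) tends to c₀ i j k as ε → 0⁺. Then there exist γ : Fin n → ℝ with γ i ≠ 0 for all i, and β : Fin n → ℤ, such that: (1) for all i, j, k the function ε ↦ c i j k * (γ i * γ j / γ k) * ε ^ (β i + β j - β k) tends to c₀ i j k as ε → 0⁺; (2) β j ≥ 0 for every index j such that f j tends to a finite limit as ε → 0⁺; and (3) β j < 0 for every index j such that |f j ε| tends to ∞ as ε → 0⁺. -/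
/-!
Put `g i = log |f i|` (Mathlib's `Real.log` already satisfies `log x = log |x|`). Along `ε → 0⁺`
the combination `g i + g j - g k` converges when `c i j k` and `c₀ i j k` are both nonzero and
tends to `-∞` when only `c₀ i j k` vanishes, while `g j` is bounded above when `f j` has a finite
limit and tends to `+∞` when `|f j|` does. So the rational linear system asking for
`x i + x j - x k = 0`, resp. `≥ 1`, `x j ≥ 0` and `x j ≤ -1` in these four cases is solvable:
otherwise Gale's theorem of the alternative, proved by Fourier–Motzkin elimination, yields a
nonnegative combination of its rows that vanishes identically but tends to `-∞` when evaluated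
at `g`. Clearing denominators gives the integer exponents `β`.

The vector `(log |c₀ i j k / c i j k|)` lies in the closure, hence in the range, of the linear map
`x ↦ (x i + x j - x k)`; a preimage `x` gives `|γ i| = exp (x i)`, and the signs of `γ` are those
of the `f i` at a single point close enough to `0`.
-/

open Filter Topology Matrix Finset

theorem Finset.exists_forall_le_and_forall_ge {α : Type*} [LinearOrder α] [Nonempty α]
    {s t : Finset α} (H : ∀ x ∈ s, ∀ y ∈ t, x ≤ y) :
    ∃ b, (∀ x ∈ s, x ≤ b) ∧ ∀ y ∈ t, b ≤ y := by
  by_cases hs : s.Nonempty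
  · exact ⟨s.max' hs, s.le_max', fun y hy => s.max'_le hs _ fun x hx => H x hx y hy⟩
  by_cases ht : t.Nonempty
  · exact ⟨t.min' ht, fun x hx => t.le_min' ht _ (H x hx), t.min'_le⟩
  · exact Nonempty.elim ‹_› fun b => ⟨b, by simp_all⟩

namespace FourierMotzkin

variable {K : Type*} [Field K] [LinearOrder K] {ι : Type*} [DecidableEq ι] (a : ι → K)

/-- Row `inl z` keeps the inequality `z` if the variable with coefficients `a` does not occur in
it; row `inr (p, q)` is the positive combination of `p` and `q` that cancels it. All other rows
are zero. -/
def eliminationMatrix : Matrix (ι ⊕ ι × ι) ι K :=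
  Matrix.of <| Sum.elim (fun z => if a z = 0 then Pi.single z 1 else 0)
    fun pq => if 0 < a pq.1 ∧ a pq.2 < 0 then Pi.single pq.1 (-a pq.2) + Pi.single pq.2 (a pq.1)
      else 0

theorem eliminationMatrix_nonneg [IsStrictOrderedRing K] (r : ι ⊕ ι × ι) (i : ι) :
    0 ≤ eliminationMatrix a r i := by
  rcases r with z | ⟨p, q⟩
  · simp only [eliminationMatrix, of_apply, Sum.elim_inl]
    split_ifs
    · simp only [Pi.single_apply]; split_ifs <;> simp
    · simp
  · simp only [eliminationMatrix, of_apply, Sum.elim_inr]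
    split_ifs with h
    · simp only [Pi.add_apply, Pi.single_apply]
      split_ifs <;> linarith [h.1, h.2]
    · simp

variable [Fintype ι]

theorem eliminationMatrix_mulVec_inl (v : ι → K) (z : ι) :
    (eliminationMatrix a *ᵥ v) (.inl z) = if a z = 0 then v z else 0 := by
  change (if a z = 0 then Pi.single z 1 else 0) ⬝ᵥ v = _
  split_ifs <;> simp

theorem eliminationMatrix_mulVec_inr (v : ι → K) (p q : ι) :
    (eliminationMatrix a *ᵥ v) (.inr (p, q)) =
      if 0 < a p ∧ a q < 0 then -a q * v p + a p * v q else 0 := by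
  change (if 0 < a p ∧ a q < 0 then Pi.single p (-a q) + Pi.single q (a p) else 0) ⬝ᵥ v = _
  split_ifs <;> simp [add_dotProduct]

theorem eliminationMatrix_mulVec_self : eliminationMatrix a *ᵥ a = 0 := by
  ext (z | ⟨p, q⟩)
  · rw [eliminationMatrix_mulVec_inl]; split_ifs with h <;> simp [h]
  · rw [eliminationMatrix_mulVec_inr, Pi.zero_apply]; split_ifs <;> ring

theorem exists_le_mul_of_eliminationMatrix_mulVec_nonpos [IsStrictOrderedRing K] {s : ι → K}
    (h : eliminationMatrix a *ᵥ s ≤ 0) : ∃ t, ∀ i, s i ≤ a i * t := by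
  have hzero (z : ι) (hz : a z = 0) : s z ≤ 0 := by
    simpa [eliminationMatrix_mulVec_inl, hz] using h (.inl z)
  have hpair (p q : ι) (hp : 0 < a p) (hq : a q < 0) : s p / a p ≤ s q / a q := by
    have := h (.inr (p, q))
    rw [eliminationMatrix_mulVec_inr, if_pos ⟨hp, hq⟩, Pi.zero_apply] at this
    rw [div_le_iff₀ hp, div_mul_eq_mul_div, le_div_iff_of_neg hq]
    linarith
  obtain ⟨t, hlow, hupp⟩ := Finset.exists_forall_le_and_forall_ge
    (s := (univ.filter (0 < a ·)).image fun p => s p / a p)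
    (t := (univ.filter (a · < 0)).image fun q => s q / a q) (by
      simp only [mem_image, mem_filter, mem_univ, true_and]
      rintro _ ⟨p, hp, rfl⟩ _ ⟨q, hq, rfl⟩
      exact hpair p q hp hq)
  refine ⟨t, fun i => ?_⟩
  rcases lt_trichotomy (a i) 0 with hi | hi | hi
  · have := hupp _ (mem_image_of_mem _ (by simpa using hi))
    rwa [le_div_iff_of_neg hi, mul_comm] at this
  · simpa [hi] using hzero i hi
  · have := hlow _ (mem_image_of_mem _ (by simpa using hi))
    rwa [div_le_iff₀ hi, mul_comm] at this

end FourierMotzkin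

/-- Gale's theorem of the alternative, by Fourier–Motzkin elimination of the last variable. -/
theorem exists_le_mulVec_or_exists_vecMul_eq_zero {K : Type*} [Field K] [LinearOrder K]
    [IsStrictOrderedRing K] {d : ℕ} :
    ∀ {ι : Type*} [Fintype ι] (A : Matrix ι (Fin d) K) (b : ι → K),
      (∃ x, b ≤ A *ᵥ x) ∨ ∃ y, 0 ≤ y ∧ y ᵥ* A = 0 ∧ 0 < y ⬝ᵥ b := by
  induction d with
  | zero =>
    intro ι _ A b
    classical
    by_cases hb : b ≤ 0
    · exact .inl ⟨0, by simpa using hb⟩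
    obtain ⟨i, hi⟩ : ∃ i, 0 < b i := by simpa [Pi.le_def] using hb
    exact .inr ⟨Pi.single i 1, by simp [Pi.single_nonneg], Subsingleton.elim _ _, by simpa using hi⟩
  | succ d ih =>
    intro ι _ A b
    classical
    set a : ι → K := fun i => A i (Fin.last d)
    set A' := A.submatrix id Fin.castSucc
    set M := FourierMotzkin.eliminationMatrix a
    rcases ih (M * A') (M *ᵥ b) with ⟨x', hx'⟩ | ⟨y', hy', hyA, hyb⟩
    · have hM : M *ᵥ (b - A' *ᵥ x') ≤ 0 := by
        rw [mulVec_sub, mulVec_mulVec]; exact sub_nonpos.2 hx'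
      obtain ⟨t, ht⟩ := FourierMotzkin.exists_le_mul_of_eliminationMatrix_mulVec_nonpos a hM
      refine .inl ⟨Fin.snoc x' t, fun i => ?_⟩
      have hsnoc : (A *ᵥ Fin.snoc x' t) i = (A' *ᵥ x') i + a i * t := by
        simp [mulVec, dotProduct, Fin.sum_univ_castSucc, A', a]
      have hti : b i - (A' *ᵥ x') i ≤ a i * t := ht i
      rw [hsnoc]; linarith
    · refine .inr ⟨y' ᵥ* M, fun i => sum_nonneg fun r _ =>
        mul_nonneg (hy' r) (FourierMotzkin.eliminationMatrix_nonneg a r i), ?_, ?_⟩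
      · ext j
        refine Fin.lastCases ?_ (fun j => ?_) j
        · change (y' ᵥ* M) ⬝ᵥ a = 0
          rw [← dotProduct_mulVec, FourierMotzkin.eliminationMatrix_mulVec_self,
            dotProduct_zero]
        · change (y' ᵥ* M ᵥ* A') j = 0
          rw [vecMul_vecMul, hyA, Pi.zero_apply]
      · rwa [← dotProduct_mulVec]

theorem Filter.Tendsto.sum_atBot_of_isBoundedUnder {α ι : Type*} {l : Filter α} {s : Finset ι}
    {u : ι → α → ℝ} (hbdd : ∀ i ∈ s, IsBoundedUnder (· ≤ ·) l (u i)) {i₀ : ι} (hi₀ : i₀ ∈ s)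
    (hbot : Tendsto (u i₀) l atBot) : Tendsto (fun a => ∑ i ∈ s, u i a) l atBot := by
  classical
  obtain ⟨C, hC⟩ :=
    (isBoundedUnder_le_sum _ fun i hi => hbdd i (mem_of_mem_erase hi)).eventually_le
  simp_rw [← add_sum_erase s _ hi₀]
  exact tendsto_atBot_add_right_of_ge' l C hbot (by simpa only [Finset.sum_apply] using hC)

/-- A Gale certificate `y` would make `y ⬝ᵥ A g`, which vanishes identically, tend to `-∞`. -/
theorem exists_le_mulVec_of_tendsto_atBot {α ι : Type*} [Fintype ι] {d : ℕ} {l : Filter α}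
    [l.NeBot] (A : Matrix ι (Fin d) ℚ) (b : ι → ℚ) (g : α → Fin d → ℝ)
    (hbdd : ∀ i, IsBoundedUnder (· ≤ ·) l fun a => (A.map (↑) *ᵥ g a) i)
    (hbot : ∀ i, 0 < b i → Tendsto (fun a => (A.map (↑) *ᵥ g a) i) l atBot) :
    ∃ x, b ≤ A *ᵥ x := by
  refine (exists_le_mulVec_or_exists_vecMul_eq_zero A b).resolve_right ?_
  rintro ⟨y, hy, hyA, hyb⟩
  obtain ⟨i₀, -, hi₀⟩ := exists_lt_of_sum_lt (s := univ) (f := 0) (g := fun i => y i * b i)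
    (by simpa [dotProduct] using hyb)
  obtain ⟨hyi₀, hbi₀⟩ := (pos_and_pos_or_neg_and_neg_of_mul_pos hi₀).resolve_right
    fun h => (hy i₀).not_gt h.1
  have hzero (a : α) : ∑ i, (y i : ℝ) * (A.map (↑) *ᵥ g a) i = 0 := by
    change (fun i => (y i : ℝ)) ⬝ᵥ (A.map (↑) *ᵥ g a) = 0
    have hyA' : (fun i => (y i : ℝ)) ᵥ* A.map (↑) = 0 := funext fun j => by
      simpa [vecMul, dotProduct] using congrArg (fun v => ((v j : ℚ) : ℝ)) hyA
    rw [dotProduct_mulVec, hyA', zero_dotProduct]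
  have hbdd_mul (i : ι) :
      IsBoundedUnder (· ≤ ·) l fun a => (y i : ℝ) * (A.map (↑) *ᵥ g a) i := by
    obtain ⟨C, hC⟩ := (hbdd i).eventually_le
    exact isBoundedUnder_of_eventually_le
      (hC.mono fun a ha => mul_le_mul_of_nonneg_left ha (by exact_mod_cast hy i))
  have hsum := Tendsto.sum_atBot_of_isBoundedUnder (fun i _ => hbdd_mul i) (mem_univ i₀)
    ((hbot i₀ hbi₀).const_mul_atBot (by exact_mod_cast hyi₀))
  simp only [hzero] at hsum
  exact not_tendsto_const_atBot 0 l hsum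

theorem exists_pos_nat_mul_eq_intCast_s15 {σ : Type*} [Fintype σ] (q : σ → ℚ) :
    ∃ N : ℕ, 0 < N ∧ ∃ β : σ → ℤ, ∀ j, (β j : ℚ) = N * q j := by
  classical
  refine ⟨∏ j, (q j).den, prod_pos fun j _ => (q j).pos,
    fun j => (q j).num * ∏ l ∈ univ.erase j, ((q l).den : ℤ), fun j => ?_⟩
  push_cast
  rw [← Rat.mul_den_eq_num, ← mul_prod_erase univ (fun l => ((q l).den : ℚ)) (mem_univ j)]
  ring

theorem exists_int_le_mulVec {ι σ : Type*} [Fintype σ] (A : Matrix ι σ ℚ) {b : ι → ℚ}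
    (hb : 0 ≤ b) {q : σ → ℚ} (hq : b ≤ A *ᵥ q) : ∃ β : σ → ℤ, b ≤ A *ᵥ fun j => (β j : ℚ) := by
  obtain ⟨N, hN, β, hβ⟩ := exists_pos_nat_mul_eq_intCast_s15 q
  refine ⟨β, fun i => ?_⟩
  have hNq : (fun j => (β j : ℚ)) = (N : ℚ) • q := funext hβ
  rw [hNq, mulVec_smul, Pi.smul_apply, smul_eq_mul]
  have hN1 : (1 : ℚ) ≤ N := by exact_mod_cast hN
  calc b i ≤ N * b i := le_mul_of_one_le_left (hb i) hN1
    _ ≤ N * (A *ᵥ q) i := by gcongr; exact hq i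

theorem Matrix.exists_mulVec_eq_of_tendsto {α m n : Type*} [Fintype m] [Fintype n]
    {l : Filter α} [l.NeBot] (M : Matrix m n ℝ) {u : α → n → ℝ} {v : m → ℝ}
    (h : Tendsto (fun a => M *ᵥ u a) l (𝓝 v)) : ∃ x, M *ᵥ x = v :=
  (Submodule.closed_of_finiteDimensional (LinearMap.range M.mulVecLin)).mem_of_tendsto h
    (Eventually.of_forall fun a => ⟨u a, rfl⟩)

theorem tendsto_zpow_nhdsGT_zero {m : ℤ} (hm : 0 < m) :
    Tendsto (fun x : ℝ => x ^ m) (𝓝[>] 0) (𝓝 0) := by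
  simpa [_root_.zero_zpow _ hm.ne'] using
    (continuousAt_zpow₀ (0 : ℝ) m (.inr hm.le)).tendsto.mono_left nhdsWithin_le_nhds

section LogLimits

variable {α : Type*} {l : Filter α} {u v w : α → ℝ}

theorem Real.isBoundedUnder_le_log_of_tendsto {L : ℝ} (h : Tendsto u l (𝓝 L)) :
    IsBoundedUnder (· ≤ ·) l fun a => Real.log (u a) :=
  h.abs.isBoundedUnder_le.mono_le <| Eventually.of_forall fun a => by
    dsimp only; rw [← Real.log_abs]; exact Real.log_le_self (abs_nonneg _)

theorem Real.tendsto_log_atTop_of_tendsto_abs (h : Tendsto (fun a => |u a|) l atTop) :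
    Tendsto (fun a => Real.log (u a)) l atTop := by
  simpa only [Function.comp_def, Real.log_abs] using Real.tendsto_log_atTop.comp h

theorem log_mul_div_eventuallyEq (hne : ∀ᶠ a in l, u a ≠ 0 ∧ v a ≠ 0 ∧ w a ≠ 0) :
    (fun a => Real.log (u a * v a / w a)) =ᶠ[l]
      fun a => Real.log (u a) + Real.log (v a) - Real.log (w a) :=
  hne.mono fun a ⟨hu, hv, hw⟩ => by
    dsimp only
    rw [Real.log_div (mul_ne_zero hu hv) hw, Real.log_mul hu hv]

theorem tendsto_log_add_log_sub_log (hne : ∀ᶠ a in l, u a ≠ 0 ∧ v a ≠ 0 ∧ w a ≠ 0) {r : ℝ}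
    (h : Tendsto (fun a => u a * v a / w a) l (𝓝 r)) (hr : r ≠ 0) :
    Tendsto (fun a => Real.log (u a) + Real.log (v a) - Real.log (w a)) l (𝓝 (Real.log r)) :=
  ((Real.continuousAt_log hr).tendsto.comp h).congr' (log_mul_div_eventuallyEq hne)

theorem tendsto_log_add_log_sub_log_atBot (hne : ∀ᶠ a in l, u a ≠ 0 ∧ v a ≠ 0 ∧ w a ≠ 0)
    (h : Tendsto (fun a => u a * v a / w a) l (𝓝 0)) :
    Tendsto (fun a => Real.log (u a) + Real.log (v a) - Real.log (w a)) l atBot := by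
  have hne' : Tendsto (fun a => u a * v a / w a) l (𝓝[≠] 0) := tendsto_nhdsWithin_iff.2
    ⟨h, hne.mono fun a ⟨hu, hv, hw⟩ => div_ne_zero (mul_ne_zero hu hv) hw⟩
  exact (Real.tendsto_log_nhdsNE_zero.comp hne').congr' (log_mul_div_eventuallyEq hne)

end LogLimits

theorem div_abs_mul_abs_eq_of_mul_pos {w r : ℝ} (h : 0 < w * r) : w / |w| * |r| = r := by
  rcases pos_and_pos_or_neg_and_neg_of_mul_pos h with ⟨hw, hr⟩ | ⟨hw, hr⟩
  · rw [abs_of_pos hw, abs_of_pos hr, div_self hw.ne', one_mul]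
  · rw [abs_of_neg hw, abs_of_neg hr, div_neg, div_self hw.ne]; ring

/-- The exponent of `ε` picked up by `c i j k` when the basis vectors are scaled by `ε ^ x`. -/
def tripleForm {R : Type*} [Ring R] {n : ℕ} (i j k : Fin n) : Fin n → R :=
  Pi.single i 1 + Pi.single j 1 - Pi.single k 1

@[simp]
theorem tripleForm_dotProduct {R : Type*} [CommRing R] {n : ℕ} (i j k : Fin n) (x : Fin n → R) :
    tripleForm i j k ⬝ᵥ x = x i + x j - x k := by
  simp [tripleForm, add_dotProduct, sub_dotProduct]

namespace Signature

variable {n : ℕ} (E P : Finset (Fin n × Fin n × Fin n)) (F I : Finset (Fin n))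

/-- The system `x i + x j - x k = 0` on `E`, `x i + x j - x k ≥ 1` on `P`, `x j ≥ 0` on `F` and
`-x j ≥ 1` on `I`, written as `bound ≤ matrix *ᵥ x`. -/
def matrix (R : Type*) [Ring R] : Matrix (E ⊕ E ⊕ P ⊕ F ⊕ I) (Fin n) R :=
  Matrix.of <| Sum.elim (fun t : E => tripleForm t.1.1 t.1.2.1 t.1.2.2) <|
    Sum.elim (fun t : E => -tripleForm t.1.1 t.1.2.1 t.1.2.2) <|
    Sum.elim (fun t : P => tripleForm t.1.1 t.1.2.1 t.1.2.2) <|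
    Sum.elim (fun j : F => Pi.single j.1 1) fun j : I => -Pi.single j.1 1

def bound : E ⊕ E ⊕ P ⊕ F ⊕ I → ℚ :=
  Sum.elim 0 <| Sum.elim 0 <| Sum.elim 1 <| Sum.elim 0 1

theorem matrix_mulVec {R : Type*} [CommRing R] (x : Fin n → R) :
    matrix E P F I R *ᵥ x =
      Sum.elim (fun t : E => x t.1.1 + x t.1.2.1 - x t.1.2.2) (Sum.elim
        (fun t : E => -(x t.1.1 + x t.1.2.1 - x t.1.2.2)) (Sum.elim
        (fun t : P => x t.1.1 + x t.1.2.1 - x t.1.2.2) (Sum.elim (fun j : F => x j)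
        fun j : I => -x j))) := by
  ext (_ | _ | _ | _ | _) <;> simp only [matrix, mulVec, of_apply, Sum.elim_inl, Sum.elim_inr,
    tripleForm_dotProduct, neg_dotProduct, single_one_dotProduct]

theorem map_matrix : (matrix E P F I ℚ).map (↑) = matrix E P F I ℝ := by
  ext (_ | _ | _ | _ | _) j <;>
    simp only [matrix, map_apply, of_apply, Sum.elim_inl, Sum.elim_inr, tripleForm, Pi.add_apply,
      Pi.sub_apply, Pi.neg_apply, Pi.single_apply] <;>
    split_ifs <;> norm_num

theorem bound_nonneg : 0 ≤ bound E P F I := by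
  rintro (_ | _ | _ | _ | _) <;> simp only [bound, Sum.elim_inl, Sum.elim_inr, Pi.zero_apply,
    Pi.one_apply, le_refl, zero_le_one]

theorem of_bound_le_mulVec {x : Fin n → ℚ} (h : bound E P F I ≤ matrix E P F I ℚ *ᵥ x) :
    (∀ t ∈ E, x t.1 + x t.2.1 - x t.2.2 = 0) ∧ (∀ t ∈ P, 1 ≤ x t.1 + x t.2.1 - x t.2.2) ∧
      (∀ j ∈ F, 0 ≤ x j) ∧ ∀ j ∈ I, x j ≤ -1 := by
  rw [matrix_mulVec] at h
  refine ⟨fun t ht => ?_, fun t ht => ?_, fun j hj => ?_, fun j hj => ?_⟩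
  · have h₁ := h (.inl ⟨t, ht⟩)
    have h₂ := h (.inr (.inl ⟨t, ht⟩))
    simp only [bound, Sum.elim_inl, Sum.elim_inr, Pi.zero_apply] at h₁ h₂
    linarith
  · simpa [bound] using h (.inr (.inr (.inl ⟨t, ht⟩)))
  · simpa [bound] using h (.inr (.inr (.inr (.inl ⟨j, hj⟩))))
  · linarith [show (1 : ℚ) ≤ -x j by simpa [bound] using h (.inr (.inr (.inr (.inr ⟨j, hj⟩))))]

theorem exists_int {α : Type*} {l : Filter α} [l.NeBot] (g : α → Fin n → ℝ)
    (hE : ∀ t ∈ E, ∃ L, Tendsto (fun a => g a t.1 + g a t.2.1 - g a t.2.2) l (𝓝 L))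
    (hP : ∀ t ∈ P, Tendsto (fun a => g a t.1 + g a t.2.1 - g a t.2.2) l atBot)
    (hF : ∀ j ∈ F, IsBoundedUnder (· ≤ ·) l fun a => g a j)
    (hI : ∀ j ∈ I, Tendsto (fun a => g a j) l atTop) :
    ∃ β : Fin n → ℤ, (∀ t ∈ E, β t.1 + β t.2.1 - β t.2.2 = 0) ∧
      (∀ t ∈ P, 0 < β t.1 + β t.2.1 - β t.2.2) ∧ (∀ j ∈ F, 0 ≤ β j) ∧ ∀ j ∈ I, β j < 0 := by
  have hrow (r : E ⊕ E ⊕ P ⊕ F ⊕ I) :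
      IsBoundedUnder (· ≤ ·) l (fun a => ((matrix E P F I ℚ).map (↑) *ᵥ g a) r) ∧
        (0 < bound E P F I r →
          Tendsto (fun a => ((matrix E P F I ℚ).map (↑) *ᵥ g a) r) l atBot) := by
    simp only [map_matrix, matrix_mulVec]
    rcases r with ⟨t, ht⟩ | ⟨t, ht⟩ | ⟨t, ht⟩ | ⟨j, hj⟩ | ⟨j, hj⟩ <;>
      simp only [bound, Sum.elim_inl, Sum.elim_inr, Pi.zero_apply, Pi.one_apply, lt_irrefl,
        zero_lt_one, false_imp_iff, forall_const, and_true]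
    · exact (hE t ht).choose_spec.isBoundedUnder_le
    · exact (hE t ht).choose_spec.neg.isBoundedUnder_le
    · exact ⟨(hP t ht).isBoundedUnder_le_atBot, hP t ht⟩
    · exact hF j hj
    · have := tendsto_neg_atTop_atBot.comp (hI j hj)
      exact ⟨this.isBoundedUnder_le_atBot, this⟩
  obtain ⟨q, hq⟩ := exists_le_mulVec_of_tendsto_atBot _ _ g (fun r => (hrow r).1)
    fun r => (hrow r).2
  obtain ⟨β, hβ⟩ := exists_int_le_mulVec _ (bound_nonneg E P F I) hq
  obtain ⟨hβE, hβP, hβF, hβI⟩ := of_bound_le_mulVec E P F I hβ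
  refine ⟨β, fun t ht => ?_, fun t ht => ?_, fun j hj => ?_, fun j hj => ?_⟩
  · exact_mod_cast hβE t ht
  · have : (1 : ℤ) ≤ β t.1 + β t.2.1 - β t.2.2 := by exact_mod_cast hβP t ht
    omega
  · exact_mod_cast hβF j hj
  · have : β j ≤ -1 := by exact_mod_cast hβI j hj
    omega

end Signature

section DiagonalContraction

variable {α : Type*} {l : Filter α} {n : ℕ} {c c₀ : Fin n → Fin n → Fin n → ℝ}
  {f : Fin n → α → ℝ}

theorem tendsto_mul_div_of_ne_zero {i j k : Fin n}
    (hlim : Tendsto (fun a => c i j k * f i a * f j a / f k a) l (𝓝 (c₀ i j k)))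
    (hc : c i j k ≠ 0) :
    Tendsto (fun a => f i a * f j a / f k a) l (𝓝 (c₀ i j k / c i j k)) :=
  (hlim.div_const (c i j k)).congr fun a => by field_simp

theorem exists_int_signature [l.NeBot] (hf : ∀ᶠ a in l, ∀ i, f i a ≠ 0)
    (hlim : ∀ i j k, Tendsto (fun a => c i j k * f i a * f j a / f k a) l (𝓝 (c₀ i j k))) :
    ∃ β : Fin n → ℤ,
      (∀ i j k, c i j k ≠ 0 → c₀ i j k ≠ 0 → β i + β j - β k = 0) ∧
      (∀ i j k, c i j k ≠ 0 → c₀ i j k = 0 → 0 < β i + β j - β k) ∧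
      (∀ j, (∃ L, Tendsto (f j) l (𝓝 L)) → 0 ≤ β j) ∧
      (∀ j, Tendsto (fun a => |f j a|) l atTop → β j < 0) := by
  classical
  have hne (i j k : Fin n) : ∀ᶠ a in l, f i a ≠ 0 ∧ f j a ≠ 0 ∧ f k a ≠ 0 :=
    hf.mono fun a ha => ⟨ha i, ha j, ha k⟩
  obtain ⟨β, hE, hP, hF, hI⟩ := Signature.exists_int
    (univ.filter fun t => c t.1 t.2.1 t.2.2 ≠ 0 ∧ c₀ t.1 t.2.1 t.2.2 ≠ 0)
    (univ.filter fun t => c t.1 t.2.1 t.2.2 ≠ 0 ∧ c₀ t.1 t.2.1 t.2.2 = 0)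
    (univ.filter fun j => ∃ L, Tendsto (f j) l (𝓝 L))
    (univ.filter fun j => Tendsto (fun a => |f j a|) l atTop)
    (fun a i => Real.log (f i a))
    (fun t ht => ⟨_, tendsto_log_add_log_sub_log (hne _ _ _)
      (tendsto_mul_div_of_ne_zero (hlim _ _ _) (mem_filter.1 ht).2.1)
      (div_ne_zero (mem_filter.1 ht).2.2 (mem_filter.1 ht).2.1)⟩)
    (fun t ht => tendsto_log_add_log_sub_log_atBot (hne _ _ _) (by
      simpa [(mem_filter.1 ht).2.2] using
        tendsto_mul_div_of_ne_zero (hlim _ _ _) (mem_filter.1 ht).2.1))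
    (fun j hj => Real.isBoundedUnder_le_log_of_tendsto (mem_filter.1 hj).2.choose_spec)
    (fun j hj => Real.tendsto_log_atTop_of_tendsto_abs (mem_filter.1 hj).2)
  exact ⟨β, fun i j k hc hc₀ => hE (i, j, k) (by simp [hc, hc₀]),
    fun i j k hc hc₀ => hP (i, j, k) (by simp [hc, hc₀]), fun j hj => hF j (by simp [hj]),
    fun j hj => hI j (by simp [hj])⟩

theorem eventually_pos_mul_div_mul_div
    (hlim : ∀ i j k, Tendsto (fun a => c i j k * f i a * f j a / f k a) l (𝓝 (c₀ i j k))) :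
    ∀ᶠ a in l, ∀ i j k, c i j k ≠ 0 → c₀ i j k ≠ 0 →
      0 < f i a * f j a / f k a * (c₀ i j k / c i j k) := by
  refine eventually_all.2 fun i => eventually_all.2 fun j => eventually_all.2 fun k => ?_
  by_cases h : c i j k ≠ 0 ∧ c₀ i j k ≠ 0
  · exact (((tendsto_mul_div_of_ne_zero (hlim i j k) h.1).mul_const _).eventually_const_lt
      (mul_self_pos.2 (div_ne_zero h.2 h.1))).mono fun a ha _ _ => ha
  · exact Eventually.of_forall fun a hc hc₀ => absurd ⟨hc, hc₀⟩ h

theorem exists_scaling [l.NeBot] (hf : ∀ᶠ a in l, ∀ i, f i a ≠ 0)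
    (hlim : ∀ i j k, Tendsto (fun a => c i j k * f i a * f j a / f k a) l (𝓝 (c₀ i j k))) :
    ∃ γ : Fin n → ℝ, (∀ i, γ i ≠ 0) ∧
      ∀ i j k, c i j k ≠ 0 → c₀ i j k ≠ 0 → c i j k * (γ i * γ j / γ k) = c₀ i j k := by
  let E := {t : Fin n × Fin n × Fin n // c t.1 t.2.1 t.2.2 ≠ 0 ∧ c₀ t.1 t.2.1 t.2.2 ≠ 0}
  let M : Matrix E (Fin n) ℝ := Matrix.of fun t => tripleForm t.1.1 t.1.2.1 t.1.2.2
  obtain ⟨x, hx⟩ := M.exists_mulVec_eq_of_tendsto (u := fun a i => Real.log (f i a))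
    (v := fun t => Real.log (c₀ t.1.1 t.1.2.1 t.1.2.2 / c t.1.1 t.1.2.1 t.1.2.2))
    (tendsto_pi_nhds.2 fun t => by
      simpa [M, mulVec] using tendsto_log_add_log_sub_log (hf.mono fun a ha => ⟨ha _, ha _, ha _⟩)
        (tendsto_mul_div_of_ne_zero (hlim _ _ _) t.2.1) (div_ne_zero t.2.2 t.2.1))
  obtain ⟨a, ha, hpos⟩ := (hf.and (eventually_pos_mul_div_mul_div hlim)).exists
  refine ⟨fun i => f i a / |f i a| * Real.exp (x i),
    fun i => mul_ne_zero (div_ne_zero (ha i) (abs_ne_zero.2 (ha i))) (Real.exp_ne_zero _),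
    fun i j k hc hc₀ => ?_⟩
  have hexp : Real.exp (x i + x j - x k) = |c₀ i j k / c i j k| := by
    have hxijk := congrFun hx ⟨(i, j, k), hc, hc₀⟩
    simp only [M, mulVec, of_apply] at hxijk
    rw [← tripleForm_dotProduct, hxijk, Real.exp_log_eq_abs (div_ne_zero hc₀ hc)]
  have hi := ha i; have hj := ha j; have hk := ha k
  calc c i j k * (f i a / |f i a| * Real.exp (x i) * (f j a / |f j a| * Real.exp (x j)) /
        (f k a / |f k a| * Real.exp (x k)))
      = c i j k * (f i a * f j a / f k a / |f i a * f j a / f k a| *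
          Real.exp (x i + x j - x k)) := by
        rw [Real.exp_sub, Real.exp_add, abs_div, abs_mul]; field_simp
    _ = c₀ i j k := by
        rw [hexp, div_abs_mul_abs_eq_of_mul_pos (hpos i j k hc hc₀), mul_div_cancel₀ _ hc]

end DiagonalContraction

theorem diagonal_contraction_equiv_genIW_integer_sign_refinement_general
    (n : ℕ) (c c₀ : Fin n → Fin n → Fin n → ℝ)
    (f : Fin n → ℝ → ℝ)
    (hfne : ∀ i, ∀ ε ∈ Set.Ioc (0 : ℝ) 1, f i ε ≠ 0)
    (hlim : ∀ i j k, Tendsto (fun ε : ℝ => c i j k * f i ε * f j ε / f k ε)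
      (𝓝[>] (0 : ℝ)) (𝓝 (c₀ i j k))) :
    ∃ γ : Fin n → ℝ, (∀ i, γ i ≠ 0) ∧ ∃ β : Fin n → ℤ,
      (∀ i j k, Tendsto (fun ε : ℝ => c i j k * (γ i * γ j / γ k) * ε ^ (β i + β j - β k))
        (𝓝[>] (0 : ℝ)) (𝓝 (c₀ i j k))) ∧
      (∀ j, (∃ L : ℝ, Tendsto (f j) (𝓝[>] (0 : ℝ)) (𝓝 L)) → 0 ≤ β j) ∧
      (∀ j, Tendsto (fun ε : ℝ => |f j ε|) (𝓝[>] (0 : ℝ)) atTop → β j < 0) := by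
  have hf : ∀ᶠ ε in 𝓝[>] (0 : ℝ), ∀ i, f i ε ≠ 0 :=
    mem_of_superset (Ioc_mem_nhdsGT zero_lt_one) fun ε hε i => hfne i ε hε
  obtain ⟨γ, hγ, hγc⟩ := exists_scaling hf hlim
  obtain ⟨β, hE, hP, hF, hI⟩ := exists_int_signature hf hlim
  refine ⟨γ, hγ, β, fun i j k => ?_, hF, hI⟩
  by_cases hc : c i j k = 0
  · have hc₀ : c₀ i j k = 0 := tendsto_nhds_unique (hlim i j k) (by simp [hc])
    simp [hc, hc₀]
  by_cases hc₀ : c₀ i j k = 0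
  · simpa [hc₀] using
      (tendsto_zpow_nhdsGT_zero (hP i j k hc hc₀)).const_mul (c i j k * (γ i * γ j / γ k))
  · simp [hE i j k hc hc₀, hγc i j k hc hc₀]

/-- Refinement of the theorem on diagonal contractions: the integer signature `β`
can be chosen so that `β j ≥ 0` whenever `f j` has a finite limit at `ε → 0⁺` and
`β j < 0` whenever `|f j|` tends to infinity at `ε → 0⁺`. -/
theorem diagonal_contraction_equiv_genIW_integer_sign_refinement
    (n : ℕ) (c c₀ : Fin n → Fin n → Fin n → ℝ)
    (hanti : ∀ i j k, c i j k = -(c j i k))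
    (hjac : ∀ i j k m, ∑ l, (c i j l * c l k m + c k i l * c l j m + c j k l * c l i m) = 0)
    (f : Fin n → ℝ → ℝ)
    (hfcont : ∀ i, ContinuousOn (f i) (Set.Ioc 0 1))
    (hfne : ∀ i, ∀ ε ∈ Set.Ioc (0 : ℝ) 1, f i ε ≠ 0)
    (hlim : ∀ i j k, Tendsto (fun ε : ℝ => c i j k * f i ε * f j ε / f k ε)
      (𝓝[>] (0 : ℝ)) (𝓝 (c₀ i j k))) :
    ∃ γ : Fin n → ℝ, (∀ i, γ i ≠ 0) ∧ ∃ β : Fin n → ℤ,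
      (∀ i j k, Tendsto (fun ε : ℝ => c i j k * (γ i * γ j / γ k) * ε ^ (β i + β j - β k))
        (𝓝[>] (0 : ℝ)) (𝓝 (c₀ i j k))) ∧
      (∀ j, (∃ L : ℝ, Tendsto (f j) (𝓝[>] (0 : ℝ)) (𝓝 L)) → 0 ≤ β j) ∧
      (∀ j, Tendsto (fun ε : ℝ => |f j ε|) (𝓝[>] (0 : ℝ)) atTop → β j < 0) :=
  diagonal_contraction_equiv_genIW_integer_sign_refinement_general n c c₀ f hfne hlim
end
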